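/- Assume A(x,y) > 0 for all x, y ∈ Ω∪Ω_δ, all quadrature weights ω_{j,i} are positive, 0 < h < δ, and χ_h ∩ Ω ≠ ∅. Then for every right-hand side f : χ_h ∩ Ω → ℝ and every boundary datum u^D : χ_h ∩ Ω_δ → ℝ there exists a unique grid function u_h : χ_h → ℝ such that −(ℒ_h^δ u_h)(x_i) = f(x_i) for all x_i ∈ χ_h ∩ Ω and u_h(x_i) = u^D(x_i) for all x_i ∈ χ_h ∩ Ω_δ (well-posedness of the discretized nonlocal diffusion problem). -/

import Mathlib

/-!
The Dirichlet problem is a square linear system on the finite grid χ_h, so existence follows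
from uniqueness, which is a discrete maximum principle. At an interior grid point where a grid
function with ℒ_h^δ w = 0 attains its maximum over χ_h, ℒ_h^δ w is a sum of nonpositive
differences with positive weights, so every grid point within distance δ attains the maximum
too. Among the maximisers take one with the largest first coordinate: if it lay in Ω, the grid
point one step h < δ further would still lie in Ω ∪ Ω_δ and be a maximiser further along. So
the maximum is attained in the collar, where the homogeneous boundary datum vanishes.
-/

open MeasureTheory Metric Set Filter

noncomputable section

/-- Euclidean space ℝ^d. -/
abbrev Eu (d : ℕ) : Type := EuclideanSpace ℝ (Fin d)

/-- The nonlocal boundary collar Ω_δ = {x ∉ Ω : dist(x, ∂Ω) < δ}. -/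
def NLcollar (d : ℕ) (Ω : Set (Eu d)) (δ : ℝ) : Set (Eu d) :=
  {x | x ∉ Ω ∧ Metric.infDist x (frontier Ω) < δ}

/-- The extended domain Ω ∪ Ω_δ. -/
def NLdom (d : ℕ) (Ω : Set (Eu d)) (δ : ℝ) : Set (Eu d) := Ω ∪ NLcollar d Ω δ

/-- The uniform Cartesian grid hℤ^d in ℝ^d. -/
def gridSet (d : ℕ) (h : ℝ) : Set (Eu d) := {x | ∀ i, ∃ k : ℤ, x i = (k : ℝ) * h}

/-- The meshfree grid set χ_h = (hℤ^d) ∩ (Ω ∪ Ω_δ). -/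
def chi (d : ℕ) (Ω : Set (Eu d)) (δ h : ℝ) : Set (Eu d) :=
  gridSet d h ∩ NLdom d Ω δ

/-- The singular kernel γ_δ(r) = D₀ / (δ^{d+2-s} r^s) for 0 < r ≤ δ, zero otherwise. -/
def gamK (d : ℕ) (s D₀ δ r : ℝ) : ℝ :=
  if 0 < r ∧ r ≤ δ then D₀ / (δ ^ ((d : ℝ) + 2 - s) * r ^ s) else 0

/-- The discrete nonlocal diffusion operator ℒ_h^δ. -/
def Lh (d : ℕ) (Ω : Set (Eu d)) (δ h s D₀ : ℝ)
    (A ω : Eu d → Eu d → ℝ) (v : Eu d → ℝ) (xi : Eu d) : ℝ :=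
  2 * ∑ᶠ xj ∈ {y | y ∈ chi d Ω δ h ∧ y ∈ ball xi δ ∧ y ≠ xi},
        A xi xj * gamK d s D₀ δ (dist xi xj) * (v xj - v xi) * ω xj xi

/-- The continuum nonlocal diffusion operator ℒ^δ. -/
def Lc (d : ℕ) (δ s D₀ : ℝ) (A : Eu d → Eu d → ℝ) (u : Eu d → ℝ) (x : Eu d) : ℝ :=
  2 * ∫ y in ball x δ, A x y * gamK d s D₀ δ (dist x y) * (u y - u x)

/-- The third-order polynomial reproducing property of the quadrature weights ω. -/
def Reproduces3 (d : ℕ) (Ω : Set (Eu d)) (δ h s D₀ : ℝ) (ω : Eu d → Eu d → ℝ) : Prop :=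
  ∀ p : MvPolynomial (Fin d) ℝ, p.totalDegree ≤ 3 → ∀ xi ∈ chi d Ω δ h ∩ Ω,
    (∑ᶠ xj ∈ {y | y ∈ chi d Ω δ h ∧ y ∈ ball xi δ ∧ y ≠ xi},
        MvPolynomial.eval (fun i => xj i - xi i) p * gamK d s D₀ δ (dist xj xi) * ω xj xi)
      = ∫ y in ball xi δ, MvPolynomial.eval (fun i => y i - xi i) p * gamK d s D₀ δ (dist y xi)


section Geometry

variable {E : Type*} [NormedAddCommGroup E] [NormedSpace ℝ E]

theorem IsPreconnected.inter_frontier_nonempty {X : Type*} [TopologicalSpace X] {s t : Set X}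
    (hs : IsPreconnected s) (hst : (s ∩ t).Nonempty) (hs_t : (s \ t).Nonempty) :
    (s ∩ frontier t).Nonempty := by
  by_contra hempty
  rw [not_nonempty_iff_eq_empty] at hempty
  have hcover : s ⊆ interior t ∪ (closure t)ᶜ := fun x hx => by
    by_cases hcl : x ∈ closure t
    · exact Or.inl (by_contra fun hint => hempty.subset ⟨hx, hcl, hint⟩)
    · exact Or.inr hcl
  obtain ⟨a, has, hat⟩ := hst
  have hsub : s ⊆ interior t :=
    hs.subset_left_of_subset_union isOpen_interior isClosed_closure.isOpen_compl
      (disjoint_compl_right.mono_left interior_subset_closure) hcover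
      ⟨a, has, (hcover has).resolve_right (not_not.mpr (subset_closure hat))⟩
  obtain ⟨b, hbs, hbt⟩ := hs_t
  exact hbt (interior_subset (hsub hbs))

theorem infDist_frontier_le_dist {s : Set E} {a b : E} (ha : a ∈ s) (hb : b ∉ s) :
    infDist b (frontier s) ≤ dist a b := by
  obtain ⟨z, hz_seg, hz⟩ := (convex_segment a b).isPreconnected.inter_frontier_nonempty
    ⟨a, left_mem_segment ℝ a b, ha⟩ ⟨b, right_mem_segment ℝ a b, hb⟩
  calc infDist b (frontier s) ≤ dist b z := infDist_le_dist_of_mem hz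
    _ ≤ dist a z + dist z b := by rw [dist_comm b z]; linarith [dist_nonneg (x := a) (y := z)]
    _ = dist a b := dist_add_dist_of_mem_segment hz_seg

end Geometry

section DiscreteOperator

variable {d : ℕ} {Ω : Set (Eu d)} {δ h s D₀ : ℝ} {A ω : Eu d → Eu d → ℝ}

theorem gamK_pos {r : ℝ} (hD₀ : 0 < D₀) (hr : 0 < r) (hrδ : r ≤ δ) :
    0 < gamK d s D₀ δ r := by
  have hδ : 0 < δ := hr.trans_le hrδ
  rw [gamK, if_pos ⟨hr, hrδ⟩]
  positivity

theorem Lh_eq_sum {xi : Eu d} (t : Finset (Eu d))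
    (ht : (t : Set (Eu d)) = {y | y ∈ chi d Ω δ h ∧ y ∈ ball xi δ ∧ y ≠ xi}) (v : Eu d → ℝ) :
    Lh d Ω δ h s D₀ A ω v xi
      = 2 * ∑ xj ∈ t, A xi xj * gamK d s D₀ δ (dist xi xj) * (v xj - v xi) * ω xj xi := by
  rw [Lh, ← ht, finsum_mem_coe_finset]

theorem finite_neighbors (hfin : (chi d Ω δ h).Finite) (xi : Eu d) :
    {y | y ∈ chi d Ω δ h ∧ y ∈ ball xi δ ∧ y ≠ xi}.Finite :=
  hfin.subset fun _ hy => hy.1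

theorem Lh_add (hfin : (chi d Ω δ h).Finite) (u v : Eu d → ℝ) (xi : Eu d) :
    Lh d Ω δ h s D₀ A ω (u + v) xi = Lh d Ω δ h s D₀ A ω u xi + Lh d Ω δ h s D₀ A ω v xi := by
  have hN := finite_neighbors hfin xi
  simp only [Lh_eq_sum hN.toFinset hN.coe_toFinset, Pi.add_apply, ← mul_add,
    ← Finset.sum_add_distrib]
  congr 1
  exact Finset.sum_congr rfl fun _ _ => by ring

theorem Lh_smul (hfin : (chi d Ω δ h).Finite) (c : ℝ) (u : Eu d → ℝ) (xi : Eu d) :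
    Lh d Ω δ h s D₀ A ω (c • u) xi = c * Lh d Ω δ h s D₀ A ω u xi := by
  have hN := finite_neighbors hfin xi
  simp only [Lh_eq_sum hN.toFinset hN.coe_toFinset, Pi.smul_apply, smul_eq_mul, Finset.mul_sum]
  exact Finset.sum_congr rfl fun _ _ => by ring

variable (d Ω δ h s D₀ A ω) in
def lhLinearMap (hfin : (chi d Ω δ h).Finite) : (Eu d → ℝ) →ₗ[ℝ] Eu d → ℝ where
  toFun := Lh d Ω δ h s D₀ A ω
  map_add' u v := funext (Lh_add hfin u v)
  map_smul' c u := funext (Lh_smul hfin c u)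

theorem Lh_sub (hfin : (chi d Ω δ h).Finite) (u v : Eu d → ℝ) (xi : Eu d) :
    Lh d Ω δ h s D₀ A ω (u - v) xi = Lh d Ω δ h s D₀ A ω u xi - Lh d Ω δ h s D₀ A ω v xi :=
  congrFun (map_sub (lhLinearMap d Ω δ h s D₀ A ω hfin) u v) xi

theorem Lh_neg (hfin : (chi d Ω δ h).Finite) (u : Eu d → ℝ) (xi : Eu d) :
    Lh d Ω δ h s D₀ A ω (-u) xi = -Lh d Ω δ h s D₀ A ω u xi :=
  congrFun (map_neg (lhLinearMap d Ω δ h s D₀ A ω hfin) u) xi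

end DiscreteOperator

section MaximumPrinciple

variable {d : ℕ} {Ω : Set (Eu d)} {δ h s D₀ : ℝ} {A ω : Eu d → Eu d → ℝ}

theorem mem_NLdom_of_dist_lt {a b : Eu d} (ha : a ∈ Ω) (hab : dist a b < δ) :
    b ∈ NLdom d Ω δ := by
  by_cases hb : b ∈ Ω
  · exact Or.inl hb
  · exact Or.inr ⟨hb, (infDist_frontier_le_dist ha hb).trans_lt hab⟩

theorem add_single_mem_gridSet {x : Eu d} (hx : x ∈ gridSet d h) (i : Fin d) :
    x + EuclideanSpace.single i h ∈ gridSet d h := by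
  intro j
  obtain ⟨k, hk⟩ := hx j
  by_cases hji : j = i
  · subst hji
    refine ⟨k + 1, ?_⟩
    simp only [PiLp.add_apply, hk, PiLp.single_eq_same, Int.cast_add, Int.cast_one]
    ring
  · exact ⟨k, by simp [hk, hji]⟩

theorem eq_of_isMaxOn_of_Lh_eq_zero (hD₀ : 0 < D₀) (hfin : (chi d Ω δ h).Finite)
    (hApos : ∀ x ∈ NLdom d Ω δ, ∀ y ∈ NLdom d Ω δ, 0 < A x y)
    (hωpos : ∀ x ∈ chi d Ω δ h, ∀ y ∈ chi d Ω δ h, 0 < ω x y) {w : Eu d → ℝ} {xi xj : Eu d}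
    (hxi : xi ∈ chi d Ω δ h) (hmax : IsMaxOn w (chi d Ω δ h) xi)
    (hL : Lh d Ω δ h s D₀ A ω w xi = 0)
    (hxj : xj ∈ chi d Ω δ h) (hdist : dist xj xi < δ) (hne : xj ≠ xi) :
    w xj = w xi := by
  have hN := finite_neighbors hfin xi
  set c : Eu d → ℝ := fun y => A xi y * gamK d s D₀ δ (dist xi y) * ω y xi
  have hc_pos : ∀ y ∈ hN.toFinset, 0 < c y := by
    intro y hy
    obtain ⟨hy, hyxi, hne⟩ := hN.mem_toFinset.mp hy
    have hA := hApos xi hxi.2 y hy.2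
    have hγ := gamK_pos (d := d) (s := s) hD₀ (dist_pos.mpr (Ne.symm hne))
      (mem_ball'.mp hyxi).le
    have hω := hωpos y hy xi hxi
    exact mul_pos (mul_pos hA hγ) hω
  have hterm_nonpos : ∀ y ∈ hN.toFinset, c y * (w y - w xi) ≤ 0 := fun y hy =>
    mul_nonpos_of_nonneg_of_nonpos (hc_pos y hy).le
      (sub_nonpos.mpr (hmax (hN.mem_toFinset.mp hy).1))
  have hsum : ∑ y ∈ hN.toFinset, c y * (w y - w xi) = 0 := by
    rw [Lh_eq_sum hN.toFinset hN.coe_toFinset, mul_eq_zero] at hL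
    rw [← hL.resolve_left two_ne_zero]
    exact Finset.sum_congr rfl fun _ _ => by ring
  have hxj_mem : xj ∈ hN.toFinset := hN.mem_toFinset.mpr ⟨hxj, mem_ball.mpr hdist, hne⟩
  have hterm := (Finset.sum_eq_zero_iff_of_nonpos hterm_nonpos).mp hsum xj hxj_mem
  exact sub_eq_zero.mp ((mul_eq_zero.mp hterm).resolve_left (hc_pos xj hxj_mem).ne')

theorem exists_mem_collar_eq_of_isMaxOn (i : Fin d) (hh : 0 < h) (hhδ : h < δ) (hD₀ : 0 < D₀)
    (hfin : (chi d Ω δ h).Finite)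
    (hApos : ∀ x ∈ NLdom d Ω δ, ∀ y ∈ NLdom d Ω δ, 0 < A x y)
    (hωpos : ∀ x ∈ chi d Ω δ h, ∀ y ∈ chi d Ω δ h, 0 < ω x y) {w : Eu d → ℝ}
    (hL : ∀ xi ∈ chi d Ω δ h ∩ Ω, Lh d Ω δ h s D₀ A ω w xi = 0)
    {x : Eu d} (hx : x ∈ chi d Ω δ h) (hmax : IsMaxOn w (chi d Ω δ h) x) :
    ∃ b ∈ chi d Ω δ h ∩ NLcollar d Ω δ, w b = w x := by
  obtain ⟨y, ⟨hy, hwy⟩, hy_last⟩ := Set.exists_max_image {y ∈ chi d Ω δ h | w y = w x}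
    (fun y => y i) (hfin.subset (sep_subset _ _)) ⟨x, hx, rfl⟩
  refine ⟨y, ⟨hy, (hy.2.resolve_left fun hyΩ => ?_)⟩, hwy⟩
  set y' := y + EuclideanSpace.single i h
  have hdist : dist y' y = h := by
    rw [dist_eq_norm, add_sub_cancel_left, PiLp.norm_single, Real.norm_of_nonneg hh.le]
  have hy' : y' ∈ chi d Ω δ h :=
    ⟨add_single_mem_gridSet hy.1 i, mem_NLdom_of_dist_lt hyΩ (by rwa [dist_comm, hdist])⟩
  have hwy' : w y' = w y :=
    eq_of_isMaxOn_of_Lh_eq_zero hD₀ hfin hApos hωpos hy (fun z hz => hwy ▸ hmax hz)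
      (hL y ⟨hy, hyΩ⟩) hy' (hdist ▸ hhδ)
      fun heq => hh.ne' (by rw [heq, dist_self] at hdist; exact hdist.symm)
  have hstep := hy_last y' ⟨hy', hwy'.trans hwy⟩
  simp only [PiLp.add_apply, PiLp.single_eq_same, add_le_iff_nonpos_right, y'] at hstep
  linarith

theorem nonpos_of_Lh_eq_zero (hd : 1 ≤ d) (hh : 0 < h) (hhδ : h < δ) (hD₀ : 0 < D₀)
    (hfin : (chi d Ω δ h).Finite)
    (hApos : ∀ x ∈ NLdom d Ω δ, ∀ y ∈ NLdom d Ω δ, 0 < A x y)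
    (hωpos : ∀ x ∈ chi d Ω δ h, ∀ y ∈ chi d Ω δ h, 0 < ω x y) {w : Eu d → ℝ}
    (hL : ∀ xi ∈ chi d Ω δ h ∩ Ω, Lh d Ω δ h s D₀ A ω w xi = 0)
    (hB : ∀ xi ∈ chi d Ω δ h ∩ NLcollar d Ω δ, w xi = 0) {x : Eu d} (hx : x ∈ chi d Ω δ h) :
    w x ≤ 0 := by
  obtain ⟨x₀, hx₀, hmax⟩ := Set.exists_max_image _ w hfin ⟨x, hx⟩
  obtain ⟨b, hb, hwb⟩ :=
    exists_mem_collar_eq_of_isMaxOn ⟨0, hd⟩ hh hhδ hD₀ hfin hApos hωpos hL hx₀ hmax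
  calc w x ≤ w x₀ := hmax x hx
    _ = 0 := hwb ▸ hB b hb

theorem eq_zero_of_Lh_eq_zero (hd : 1 ≤ d) (hh : 0 < h) (hhδ : h < δ) (hD₀ : 0 < D₀)
    (hfin : (chi d Ω δ h).Finite)
    (hApos : ∀ x ∈ NLdom d Ω δ, ∀ y ∈ NLdom d Ω δ, 0 < A x y)
    (hωpos : ∀ x ∈ chi d Ω δ h, ∀ y ∈ chi d Ω δ h, 0 < ω x y) {w : Eu d → ℝ}
    (hL : ∀ xi ∈ chi d Ω δ h ∩ Ω, Lh d Ω δ h s D₀ A ω w xi = 0)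
    (hB : ∀ xi ∈ chi d Ω δ h ∩ NLcollar d Ω δ, w xi = 0) {x : Eu d} (hx : x ∈ chi d Ω δ h) :
    w x = 0 := by
  refine le_antisymm (nonpos_of_Lh_eq_zero hd hh hhδ hD₀ hfin hApos hωpos hL hB hx) ?_
  have := nonpos_of_Lh_eq_zero hd hh hhδ hD₀ hfin hApos hωpos (w := -w)
    (fun xi hxi => by rw [Lh_neg hfin, hL xi hxi, neg_zero])
    (fun xi hxi => by rw [Pi.neg_apply, hB xi hxi, neg_zero]) hx
  simpa using this

end MaximumPrinciple

section DirichletProblem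

variable {d : ℕ} {Ω : Set (Eu d)} {δ h : ℝ}

open Classical in
def dirichletOp (s D₀ : ℝ) (A ω : Eu d → Eu d → ℝ) (hfin : (chi d Ω δ h).Finite) :
    (chi d Ω δ h → ℝ) →ₗ[ℝ] chi d Ω δ h → ℝ :=
  LinearMap.pi fun x => if (x : Eu d) ∈ Ω then
      -(LinearMap.proj (x : Eu d) ∘ₗ lhLinearMap d Ω δ h s D₀ A ω hfin ∘ₗ
        Function.ExtendByZero.linearMap ℝ Subtype.val)
    else LinearMap.proj x

variable {s D₀ : ℝ} {A ω : Eu d → Eu d → ℝ}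

theorem dirichletOp_apply_of_mem (hfin : (chi d Ω δ h).Finite) (v : chi d Ω δ h → ℝ)
    {x : chi d Ω δ h} (hx : (x : Eu d) ∈ Ω) :
    dirichletOp s D₀ A ω hfin v x = -Lh d Ω δ h s D₀ A ω (Function.extend Subtype.val v 0) x := by
  simp only [dirichletOp, LinearMap.pi_apply, hx, ↓reduceIte]
  rfl

theorem dirichletOp_apply_of_not_mem (hfin : (chi d Ω δ h).Finite) (v : chi d Ω δ h → ℝ)
    {x : chi d Ω δ h} (hx : (x : Eu d) ∉ Ω) :
    dirichletOp s D₀ A ω hfin v x = v x := by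
  simp [dirichletOp, hx]

theorem dirichletOp_injective (hd : 1 ≤ d) (hh : 0 < h) (hhδ : h < δ) (hD₀ : 0 < D₀)
    (hfin : (chi d Ω δ h).Finite)
    (hApos : ∀ x ∈ NLdom d Ω δ, ∀ y ∈ NLdom d Ω δ, 0 < A x y)
    (hωpos : ∀ x ∈ chi d Ω δ h, ∀ y ∈ chi d Ω δ h, 0 < ω x y) :
    Function.Injective (dirichletOp s D₀ A ω hfin) := by
  rw [← LinearMap.ker_eq_bot, LinearMap.ker_eq_bot']
  intro v hv
  funext x
  have hext := Subtype.val_injective.extend_apply v (0 : Eu d → ℝ) x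
  rw [Pi.zero_apply, ← hext]
  refine eq_zero_of_Lh_eq_zero (s := s) hd hh hhδ hD₀ hfin hApos hωpos (fun xi hxi => ?_)
    (fun xi hxi => ?_) x.2
  · simpa [dirichletOp_apply_of_mem hfin v (x := ⟨xi, hxi.1⟩) hxi.2] using congrFun hv ⟨xi, hxi.1⟩
  · rw [Subtype.val_injective.extend_apply v 0 ⟨xi, hxi.1⟩,
      ← dirichletOp_apply_of_not_mem hfin v (x := ⟨xi, hxi.1⟩) hxi.2.1, hv, Pi.zero_apply]

theorem exists_dirichlet_solution (hd : 1 ≤ d) (hh : 0 < h) (hhδ : h < δ) (hD₀ : 0 < D₀)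
    (hfin : (chi d Ω δ h).Finite)
    (hApos : ∀ x ∈ NLdom d Ω δ, ∀ y ∈ NLdom d Ω δ, 0 < A x y)
    (hωpos : ∀ x ∈ chi d Ω δ h, ∀ y ∈ chi d Ω δ h, 0 < ω x y) (f uD : Eu d → ℝ) :
    ∃ u : Eu d → ℝ, (∀ xi ∈ chi d Ω δ h ∩ Ω, -(Lh d Ω δ h s D₀ A ω u xi) = f xi) ∧
      ∀ xi ∈ chi d Ω δ h ∩ NLcollar d Ω δ, u xi = uD xi := by
  classical
  have := hfin.to_subtype
  obtain ⟨v, hv⟩ := LinearMap.injective_iff_surjective.mp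
    (dirichletOp_injective hd hh hhδ hD₀ hfin hApos hωpos)
    fun x : chi d Ω δ h => if (x : Eu d) ∈ Ω then f x else uD x
  refine ⟨Function.extend Subtype.val v 0, fun xi hxi => ?_, fun xi hxi => ?_⟩
  · have := congrFun hv ⟨xi, hxi.1⟩
    rwa [dirichletOp_apply_of_mem hfin v hxi.2, if_pos hxi.2] at this
  · have := congrFun hv ⟨xi, hxi.1⟩
    rwa [dirichletOp_apply_of_not_mem hfin v hxi.2.1, if_neg hxi.2.1,
      ← Subtype.val_injective.extend_apply v 0] at this

theorem eq_of_dirichlet_solutions (hd : 1 ≤ d) (hh : 0 < h) (hhδ : h < δ) (hD₀ : 0 < D₀)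
    (hfin : (chi d Ω δ h).Finite)
    (hApos : ∀ x ∈ NLdom d Ω δ, ∀ y ∈ NLdom d Ω δ, 0 < A x y)
    (hωpos : ∀ x ∈ chi d Ω δ h, ∀ y ∈ chi d Ω δ h, 0 < ω x y) {u u' : Eu d → ℝ}
    (hL : ∀ xi ∈ chi d Ω δ h ∩ Ω, Lh d Ω δ h s D₀ A ω u' xi = Lh d Ω δ h s D₀ A ω u xi)
    (hB : ∀ xi ∈ chi d Ω δ h ∩ NLcollar d Ω δ, u' xi = u xi) {x : Eu d}
    (hx : x ∈ chi d Ω δ h) :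
    u' x = u x :=
  sub_eq_zero.mp <| eq_zero_of_Lh_eq_zero (w := u' - u) hd hh hhδ hD₀ hfin hApos hωpos
    (fun xi hxi => by rw [Lh_sub hfin, hL xi hxi, sub_self])
    (fun xi hxi => by rw [Pi.sub_apply, hB xi hxi, sub_self]) hx

end DirichletProblem

theorem discrete_wellposed_general
    (d : ℕ) (hd : 1 ≤ d) (Ω : Set (Eu d))
    (δ : ℝ) (h : ℝ) (hh : 0 < h) (hhδ : h < δ)
    (s : ℝ)
    (D₀ : ℝ) (hD₀ : 0 < D₀)
    (hfin : (chi d Ω δ h).Finite)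
    (A ω : Eu d → Eu d → ℝ)
    (hApos : ∀ x ∈ NLdom d Ω δ, ∀ y ∈ NLdom d Ω δ, 0 < A x y)
    (hωpos : ∀ x ∈ chi d Ω δ h, ∀ y ∈ chi d Ω δ h, 0 < ω x y) :
    ∀ f uD : Eu d → ℝ, ∃ u : Eu d → ℝ,
      ((∀ xi ∈ chi d Ω δ h ∩ Ω, -(Lh d Ω δ h s D₀ A ω u xi) = f xi) ∧
        (∀ xi ∈ chi d Ω δ h ∩ NLcollar d Ω δ, u xi = uD xi)) ∧
      ∀ u' : Eu d → ℝ,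
        (∀ xi ∈ chi d Ω δ h ∩ Ω, -(Lh d Ω δ h s D₀ A ω u' xi) = f xi) →
        (∀ xi ∈ chi d Ω δ h ∩ NLcollar d Ω δ, u' xi = uD xi) →
        ∀ x ∈ chi d Ω δ h, u' x = u x := by
  intro f uD
  obtain ⟨u, hLu, hBu⟩ := exists_dirichlet_solution hd hh hhδ hD₀ hfin hApos hωpos f uD
  refine ⟨u, ⟨hLu, hBu⟩, fun u' hLu' hBu' x hx => ?_⟩
  exact eq_of_dirichlet_solutions hd hh hhδ hD₀ hfin hApos hωpos
    (fun xi hxi => neg_injective ((hLu' xi hxi).trans (hLu xi hxi).symm))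
    (fun xi hxi => (hBu' xi hxi).trans (hBu xi hxi).symm) hx

/-- Well-posedness of the discretized nonlocal diffusion problem: for every right-hand
side f and boundary datum u^D there is a unique grid function u_h with
−ℒ_h^δ u_h = f on χ_h ∩ Ω and u_h = u^D on χ_h ∩ Ω_δ. -/
theorem discrete_wellposed
    (d : ℕ) (hd : 1 ≤ d) (Ω : Set (Eu d))
    (hΩopen : IsOpen Ω) (hΩbdd : Bornology.IsBounded Ω) (hΩconn : IsConnected Ω)
    (δ : ℝ) (hδ : 0 < δ) (h : ℝ) (hh : 0 < h) (hhδ : h < δ)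
    (s : ℝ) (hs0 : 0 ≤ s) (hsd : s < (d : ℝ))
    (D₀ : ℝ) (hD₀ : 0 < D₀)
    (hnorm : (∫ z in ball (0 : Eu d) δ, gamK d s D₀ δ ‖z‖ * ‖z‖ ^ 2) = (d : ℝ))
    (hfin : (chi d Ω δ h).Finite)
    (A ω : Eu d → Eu d → ℝ)
    (hApos : ∀ x ∈ NLdom d Ω δ, ∀ y ∈ NLdom d Ω δ, 0 < A x y)
    (hωpos : ∀ x ∈ chi d Ω δ h, ∀ y ∈ chi d Ω δ h, 0 < ω x y)
    (hne : (chi d Ω δ h ∩ Ω).Nonempty) :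
    ∀ f uD : Eu d → ℝ, ∃ u : Eu d → ℝ,
      ((∀ xi ∈ chi d Ω δ h ∩ Ω, -(Lh d Ω δ h s D₀ A ω u xi) = f xi) ∧
        (∀ xi ∈ chi d Ω δ h ∩ NLcollar d Ω δ, u xi = uD xi)) ∧
      ∀ u' : Eu d → ℝ,
        (∀ xi ∈ chi d Ω δ h ∩ Ω, -(Lh d Ω δ h s D₀ A ω u' xi) = f xi) →
        (∀ xi ∈ chi d Ω δ h ∩ NLcollar d Ω δ, u' xi = uD xi) →
        ∀ x ∈ chi d Ω δ h, u' x = u x :=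
  discrete_wellposed_general d hd Ω δ h hh hhδ s D₀ hD₀ hfin A ω hApos hωpos
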